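/- If f : V → ℝ is 1-Lipschitz with respect to the graph metric of a finite connected graph, then the function L^α f is also Lipschitz: for adjacent vertices i, j one has |(L^α f)(i) − (L^α f)(j)| ≤ 3 − 2α. -/

import Mathlib

open Finset

variable {V : Type*} [Fintype V] [DecidableEq V]

/-- The α-lazy random walk operator acting on functions. -/
noncomputable def lazyOp (G : SimpleGraph V) [DecidableRel G.Adj] (α : ℝ) (f : V → ℝ)
    (i : V) : ℝ :=
  α * f i + (1 - α) / (G.degree i : ℝ) * ∑ v ∈ G.neighborFinset i, f v

/-!
Write `(L^α f)(x) - c = α (f x - c) + (1 - α) 𝔼_{v ∼ x} (f v - c)` with `c = f j`. The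
neighbours of `j` and `i` itself lie within distance `1` of `j`, and the neighbours of `i` within
distance `2`, so `|(L^α f)(i) - f j| ≤ α + 2 (1 - α)` and `|(L^α f)(j) - f j| ≤ 1 - α`.
-/

open scoped BigOperators

lemma Finset.abs_expect_sub_le {ι α : Type*} [AddCommGroup α] [LinearOrder α]
    [IsOrderedAddMonoid α] [Module ℚ≥0 α] [PosSMulMono ℚ≥0 α] {s : Finset ι} (hs : s.Nonempty)
    {f : ι → α} {c B : α} (h : ∀ i ∈ s, |f i - c| ≤ B) : |𝔼 i ∈ s, f i - c| ≤ B := by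
  rw [← expect_const hs c, ← expect_sub_distrib]
  exact (abs_expect_le _ _).trans (expect_le hs h)

lemma SimpleGraph.abs_sub_le_walk_length {W : Type*} {G : SimpleGraph W} {f : W → ℝ}
    (hf : ∀ x y, |f x - f y| ≤ (G.dist x y : ℝ)) {u v : W} (p : G.Walk u v) :
    |f u - f v| ≤ p.length :=
  (hf u v).trans (mod_cast dist_le p)

section

variable {W : Type*} [Fintype W] (G : SimpleGraph W) [DecidableRel G.Adj]

lemma lazyOp_eq_expect (α : ℝ) (f : W → ℝ) (x : W) :
    lazyOp G α f x = α * f x + (1 - α) * 𝔼 v ∈ G.neighborFinset x, f v := by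
  rw [lazyOp, expect_eq_sum_div_card, G.card_neighborFinset_eq_degree, div_mul_eq_mul_div,
    mul_div_assoc]

lemma abs_lazyOp_sub_le {α : ℝ} (hα : α ∈ Set.Icc (0 : ℝ) 1) {f : W → ℝ} {x : W}
    (hx : (G.neighborFinset x).Nonempty) {c a b : ℝ} (hfx : |f x - c| ≤ a)
    (hN : ∀ v ∈ G.neighborFinset x, |f v - c| ≤ b) :
    |lazyOp G α f x - c| ≤ α * a + (1 - α) * b := by
  obtain ⟨hα0, hα1⟩ := hα
  have hsplit : lazyOp G α f x - c
      = α * (f x - c) + (1 - α) * (𝔼 v ∈ G.neighborFinset x, f v - c) := by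
    rw [lazyOp_eq_expect]; ring
  calc |lazyOp G α f x - c|
      ≤ α * |f x - c| + (1 - α) * |𝔼 v ∈ G.neighborFinset x, f v - c| := by
        rw [hsplit]
        refine (abs_add_le _ _).trans_eq ?_
        rw [abs_mul, abs_mul, abs_of_nonneg hα0, abs_of_nonneg (sub_nonneg.2 hα1)]
    _ ≤ α * a + (1 - α) * b :=
        add_le_add (mul_le_mul_of_nonneg_left hfx hα0)
          (mul_le_mul_of_nonneg_left (abs_expect_sub_le hx hN) (sub_nonneg.2 hα1))

end

open SimpleGraph in
theorem lazyOp_lipschitz_general (G : SimpleGraph V) [DecidableRel G.Adj]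
    (α : ℝ) (hα : α ∈ Set.Icc (0:ℝ) 1) (f : V → ℝ)
    (hf : ∀ x y, |f x - f y| ≤ (G.dist x y : ℝ)) (i j : V) (hij : G.Adj i j) :
    |lazyOp G α f i - lazyOp G α f j| ≤ 3 - 2 * α := by
  have hfij : |f i - f j| ≤ 1 := by simpa using abs_sub_le_walk_length hf hij.toWalk
  have hNi : ∀ v ∈ G.neighborFinset i, |f v - f j| ≤ 2 := fun v hv ↦ by
    simpa using abs_sub_le_walk_length hf (.cons ((mem_neighborFinset _ _ _).1 hv).symm hij.toWalk)
  have hNj : ∀ v ∈ G.neighborFinset j, |f v - f j| ≤ 1 := fun v hv ↦ by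
    simpa using abs_sub_le_walk_length hf ((mem_neighborFinset _ _ _).1 hv).symm.toWalk
  have hLi : |lazyOp G α f i - f j| ≤ α * 1 + (1 - α) * 2 :=
    abs_lazyOp_sub_le G hα ⟨j, (mem_neighborFinset _ _ _).2 hij⟩ hfij hNi
  have hLj : |lazyOp G α f j - f j| ≤ α * 0 + (1 - α) * 1 :=
    abs_lazyOp_sub_le G hα ⟨i, (mem_neighborFinset _ _ _).2 hij.symm⟩ (by simp) hNj
  calc |lazyOp G α f i - lazyOp G α f j|
      ≤ |lazyOp G α f i - f j| + |lazyOp G α f j - f j| :=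
        (abs_sub_le _ _ _).trans_eq (by rw [abs_sub_comm (f j)])
    _ ≤ 3 - 2 * α := by linarith

/-- If `f` is 1-Lipschitz for the graph metric of a finite connected graph, then for
adjacent vertices `i, j` we have `|(L^α f)(i) - (L^α f)(j)| ≤ 3 - 2α`. -/
theorem lazyOp_lipschitz (G : SimpleGraph V) [DecidableRel G.Adj] (hconn : G.Connected)
    (α : ℝ) (hα : α ∈ Set.Icc (0:ℝ) 1) (f : V → ℝ)
    (hf : ∀ x y, |f x - f y| ≤ (G.dist x y : ℝ)) (i j : V) (hij : G.Adj i j) :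
    |lazyOp G α f i - lazyOp G α f j| ≤ 3 - 2 * α :=
  lazyOp_lipschitz_general G α hα f hf i j hij
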